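/- Let n be a positive natural number and let S be the Rees semigroup with trivial group G = {1}, index sets I = Λ = Fin n, and sandwich matrix P λ i equal to 1 if λ = i and to 𝐨 otherwise (so S is the system of n×n matrix units together with a zero). Then the contracted semigroup algebra ℂ₀[S] is isomorphic as a ℂ-algebra to the full matrix algebra Matrix (Fin n) (Fin n) ℂ, via the map sending the basis vector indexed by (i, 1, j) to the standard matrix unit E_{ij} (the matrix with 1 in entry (i,j) and 0 elsewhere). -/

import Mathlib

open scoped Classical

/-- The product of two nonzero elements of the Rees semigroup `S(G; I, Λ; P)`,
taking values in `S = WithZero (I × G × Λ)`: the result is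
`(i, g * p_{λ j} * h, μ)` if the sandwich entry `p_{λ j}` is nonzero, and `∅ = 0`
otherwise. -/
noncomputable def reesMulAux {G I Λ : Type*} [Group G] (P : Λ → I → WithZero G)
    (s t : I × G × Λ) : WithZero (I × G × Λ) :=
  if h : P s.2.2 t.1 = 0 then 0
  else (((s.1, s.2.1 * WithZero.unzero h * t.2.1, t.2.2) : I × G × Λ) :
    WithZero (I × G × Λ))

/-- The Rees multiplication on `S = (I × G × Λ) ∪ {∅} = WithZero (I × G × Λ)`,
where the adjoined zero `∅ = 0` is absorbing. -/
noncomputable def reesMul {G I Λ : Type*} [Group G] (P : Λ → I → WithZero G)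
    (x y : WithZero (I × G × Λ)) : WithZero (I × G × Λ) :=
  if hx : x = 0 then 0
  else if hy : y = 0 then 0
  else reesMulAux P (WithZero.unzero hx) (WithZero.unzero hy)

/-- The product `δ_s * δ_t` of two basis vectors of the contracted semigroup algebra
`A = ℂ₀[S]`: it is `δ_{s·t}` if `s·t ≠ ∅` in `S`, and `0` if `s·t = ∅`. -/
noncomputable def reesDelta {G I Λ : Type*} [Group G] (P : Λ → I → WithZero G)
    (s t : I × G × Λ) : (I × G × Λ) →₀ ℂ :=
  if h : P s.2.2 t.1 = 0 then 0
  else Finsupp.single (s.1, s.2.1 * WithZero.unzero h * t.2.1, t.2.2) (1 : ℂ)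

/-- The multiplication of the contracted semigroup algebra `A = ℂ₀[S]`, as the
(unique) bilinear map determined on basis vectors by `δ_s * δ_t = δ_{s·t}` if
`s·t ≠ ∅` in `S` and `δ_s * δ_t = 0` if `s·t = ∅`. -/
noncomputable def reesAlgMul {G I Λ : Type*} [Group G] (P : Λ → I → WithZero G) :
    ((I × G × Λ) →₀ ℂ) →ₗ[ℂ] ((I × G × Λ) →₀ ℂ) →ₗ[ℂ] ((I × G × Λ) →₀ ℂ) :=
  Finsupp.lift (((I × G × Λ) →₀ ℂ) →ₗ[ℂ] ((I × G × Λ) →₀ ℂ)) ℂ (I × G × Λ)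
    fun s => Finsupp.lift ((I × G × Λ) →₀ ℂ) ℂ (I × G × Λ) fun t => reesDelta P s t

/-! Reading the coefficient of `δ_(i,1,j)` as the `(i, j)` entry identifies `ℂ₀[S]` with the
matrices as a vector space. Since the sandwich matrix is the identity,
`δ_(i,1,j) * δ_(k,1,l) = [j = k] δ_(i,1,l)`, which is the rule `E_ij E_kl = [j = k] E_il` for
matrix units; both multiplications are bilinear, so agreeing on basis vectors suffices. -/

theorem reesAlgMul_single_single {G I Λ : Type*} [Group G] (P : Λ → I → WithZero G)
    (s t : I × G × Λ) :
    reesAlgMul P (Finsupp.single s 1) (Finsupp.single t 1) = reesDelta P s t := by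
  simp [reesAlgMul, Finsupp.lift_apply]

theorem Finsupp.bilinear_ext {R α β P : Type*} [CommSemiring R] [AddCommMonoid P]
    [Module R P] {f g : (α →₀ R) →ₗ[R] (β →₀ R) →ₗ[R] P}
    (h : ∀ a b, f (Finsupp.single a 1) (Finsupp.single b 1)
      = g (Finsupp.single a 1) (Finsupp.single b 1)) : f = g :=
  Finsupp.lhom_ext' fun a => LinearMap.ext_ring <|
    Finsupp.lhom_ext' fun b => LinearMap.ext_ring (h a b)

noncomputable def matrixUnitsEquiv (R I J : Type*) [Semiring R] [Finite I] [Finite J] :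
    ((I × PUnit × J) →₀ R) ≃ₗ[R] Matrix I J R where
  toFun f := Matrix.of fun i j => f (i, PUnit.unit, j)
  invFun M := Finsupp.equivFunOnFinite.symm fun x => M x.1 x.2.2
  map_add' f g := by ext i j; simp
  map_smul' c f := by ext i j; simp
  left_inv f := by ext ⟨i, ⟨⟩, j⟩; rfl
  right_inv M := by ext i j; rfl

theorem matrixUnitsEquiv_single {R I J : Type*} [Semiring R] [Finite I] [Finite J] [DecidableEq I]
    [DecidableEq J] (i : I) (j : J) (c : R) :
    matrixUnitsEquiv R I J (Finsupp.single (i, PUnit.unit, j) c) = Matrix.single i j c := by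
  ext i' j'
  simp [matrixUnitsEquiv, Finsupp.single_apply, Matrix.single_apply]

def identitySandwich (I : Type*) [DecidableEq I] : I → I → WithZero PUnit :=
  fun lam i => if lam = i then 1 else 0

theorem reesDelta_identitySandwich {I : Type*} [DecidableEq I] (i j k l : I) :
    reesDelta (identitySandwich I) (i, PUnit.unit, j) (k, PUnit.unit, l)
      = if j = k then Finsupp.single (i, PUnit.unit, l) 1 else 0 := by
  rcases eq_or_ne j k with rfl | h <;> simp [reesDelta, identitySandwich, *]

theorem matrixUnitsEquiv_reesAlgMul {I : Type*} [Fintype I] [DecidableEq I]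
    (a b : (I × PUnit × I) →₀ ℂ) :
    matrixUnitsEquiv ℂ I I (reesAlgMul (identitySandwich I) a b)
      = matrixUnitsEquiv ℂ I I a * matrixUnitsEquiv ℂ I I b := by
  let e := (matrixUnitsEquiv ℂ I I).toLinearMap
  suffices (reesAlgMul (identitySandwich I)).compr₂ e
      = (LinearMap.mul ℂ (Matrix I I ℂ)).compl₁₂ e e from LinearMap.congr_fun₂ this a b
  refine Finsupp.bilinear_ext fun ⟨i, ⟨⟩, j⟩ ⟨k, ⟨⟩, l⟩ => ?_
  rcases eq_or_ne j k with rfl | h <;>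
    simp [e, reesAlgMul_single_single, reesDelta_identitySandwich, matrixUnitsEquiv_single, *]

theorem rees_matrix_units_algebra_iso_matrix_general
    (n : ℕ) :
    ∃ F : ((Fin n × PUnit × Fin n) →₀ ℂ) ≃ₗ[ℂ] Matrix (Fin n) (Fin n) ℂ,
      (∀ a b : (Fin n × PUnit × Fin n) →₀ ℂ,
        F (reesAlgMul (fun lam i : Fin n => if lam = i then (1 : WithZero PUnit) else 0) a b)
          = F a * F b) ∧
      (∀ i j : Fin n,
        F (Finsupp.single ((i, PUnit.unit, j) : Fin n × PUnit × Fin n) (1 : ℂ))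
          = Matrix.single i j (1 : ℂ)) :=
  ⟨matrixUnitsEquiv ℂ (Fin n) (Fin n), matrixUnitsEquiv_reesAlgMul,
    fun i j => matrixUnitsEquiv_single i j 1⟩

/-- for `n > 0`, the contracted algebra of the Rees semigroup over the
trivial group with `I = Λ = Fin n` and identity sandwich matrix (the semigroup of
`n × n` matrix units with zero) is isomorphic as a `ℂ`-algebra to the full matrix
algebra `Matrix (Fin n) (Fin n) ℂ`, via `δ_{(i, 1, j)} ↦ E_{ij}`. -/
theorem rees_matrix_units_algebra_iso_matrix
    (n : ℕ) (hn : 0 < n) :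
    ∃ F : ((Fin n × PUnit × Fin n) →₀ ℂ) ≃ₗ[ℂ] Matrix (Fin n) (Fin n) ℂ,
      (∀ a b : (Fin n × PUnit × Fin n) →₀ ℂ,
        F (reesAlgMul (fun lam i : Fin n => if lam = i then (1 : WithZero PUnit) else 0) a b)
          = F a * F b) ∧
      (∀ i j : Fin n,
        F (Finsupp.single ((i, PUnit.unit, j) : Fin n × PUnit × Fin n) (1 : ℂ))
          = Matrix.single i j (1 : ℂ)) :=
  rees_matrix_units_algebra_iso_matrix_general n
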